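/- arXiv:2108.06832 — 3 statements merged into one kernel-verified Lean document; each statement's English description precedes it below -/
import Mathlib

section
/- Let H be a hand with KB-blocks B, let π be a quasi-decomposition of H under KB with type (m, n, p, e, re, rm, em), and for each b ∈ B let (m_b, n_b, p_b, e_b, re_b, rm_b, em_b) be the type of the restriction π↓b of π to b. Then: (i) em = 1 if and only if e = 0 and there exists b ∈ B such that em_b = 1 and re_{b'} = rm_{b'} = em_{b'} = 0 for all b' ≠ b; (ii) m = Σ_b m_b, n = Σ_b n_b, p = Σ_b p_b, e = Σ_b e_b; and (iii) re = max_b re_b and rm = max_b rm_b. -/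
attribute [local instance] Classical.propDecidable

/-- A Mahjong tile: a colour in {0,1,2} and a number in {1,...,9}. -/
abbrev Tile : Type := Fin 3 × Fin 9

/-- A `k`-tile: a multiset of `k` tiles in which no tile occurs more than 4 times. -/
def IsKTile (k : ℕ) (H : Multiset Tile) : Prop :=
  Multiset.card H = k ∧ ∀ t : Tile, H.count t ≤ 4

/-- A pong: three identical tiles. -/
def IsPong (s : Multiset Tile) : Prop := ∃ t : Tile, s = {t, t, t}

/-- A chow: three consecutive tiles of the same colour. -/
def IsChow (s : Multiset Tile) : Prop :=
  ∃ (c : Fin 3) (i j k : Fin 9),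
    (j : ℕ) = (i : ℕ) + 1 ∧ (k : ℕ) = (i : ℕ) + 2 ∧ s = {(c, i), (c, j), (c, k)}

/-- A meld: a pong or a chow. -/
def IsMeld (s : Multiset Tile) : Prop := IsPong s ∨ IsChow s

/-- A pair: two identical tiles. -/
def IsPair (s : Multiset Tile) : Prop := ∃ t : Tile, s = {t, t}

/-- A pchow: two tiles that become a chow after adding one appropriate tile. -/
def IsPchow (s : Multiset Tile) : Prop := ∃ t : Tile, IsChow (t ::ₘ s)

/-- A pmeld: a pchow or a pair. -/
def IsPmeld (s : Multiset Tile) : Prop := IsPchow s ∨ IsPair s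

/-- `π` is a decomposition of `H` into four melds and one pair (the eye). -/
def IsDecompOf (π : Fin 5 → Multiset Tile) (H : Multiset Tile) : Prop :=
  (∑ i, π i) = H ∧ (∀ i : Fin 5, (i : ℕ) < 4 → IsMeld (π i)) ∧ IsPair (π 4)

/-- A 14-tile is complete (winning) if it decomposes into four melds and one pair. -/
def Complete (H : Multiset Tile) : Prop := ∃ π : Fin 5 → Multiset Tile, IsDecompOf π H

/-- `H[t/t']`: replace one copy of `t` in `H` by `t'`. -/
def replaceTile (H : Multiset Tile) (t t' : Tile) : Multiset Tile := t' ::ₘ H.erase t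

/-- `Reach H k`: `H` can be made complete with `k` (legal) tile changes. -/
inductive Reach : Multiset Tile → ℕ → Prop
  | zero {H : Multiset Tile} : Complete H → Reach H 0
  | succ {H : Multiset Tile} {l : ℕ} (t t' : Tile) :
      t ∈ H → (∀ s : Tile, (replaceTile H t t').count s ≤ 4) →
      Reach (replaceTile H t t') l → Reach H (l + 1)

/-- The (plain) deficiency number of a 14-tile. -/
noncomputable def dfncy (H : Multiset Tile) : ℕ∞ :=
  sInf {c : ℕ∞ | ∃ k : ℕ, Reach H k ∧ c = (k : ℕ∞)}

/-- A knowledge base assigns each tile kind a multiplicity in {0,...,4}. -/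
def IsKB (KB : Tile → ℕ) : Prop := ∀ t : Tile, KB t ≤ 4

/-- `H` and `KB` are compatible: each tile occurs at most 4 times in total. -/
def KBCompatible (H : Multiset Tile) (KB : Tile → ℕ) : Prop :=
  ∀ t : Tile, H.count t + KB t ≤ 4

/-- `KB ⊖ t`: remove one copy of `t` from the knowledge base. -/
noncomputable def kbRemove (KB : Tile → ℕ) (t : Tile) : Tile → ℕ :=
  Function.update KB t (KB t - 1)

/-- `ReachKB H KB k`: `H` can be made complete with `k` tile changes,
replacement tiles being drawn from (and removed from) `KB`. -/
inductive ReachKB : Multiset Tile → (Tile → ℕ) → ℕ → Prop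
  | zero {H : Multiset Tile} {KB : Tile → ℕ} : Complete H → ReachKB H KB 0
  | succ {H : Multiset Tile} {KB : Tile → ℕ} {l : ℕ} (t t' : Tile) :
      t ∈ H → 0 < KB t' →
      ReachKB (replaceTile H t t') (kbRemove KB t') l → ReachKB H KB (l + 1)

/-- The knowledge-aware deficiency number of a 14-tile (⊤ if incompletable). -/
noncomputable def dfncyKB (H : Multiset Tile) (KB : Tile → ℕ) : ℕ∞ :=
  sInf {c : ℕ∞ | ∃ k : ℕ, ReachKB H KB k ∧ c = (k : ℕ∞)}

/-- A pre-decomposition (pDCMP) of `H`: five pairwise disjoint sub-multisets of `H`;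
the last is a pair, a single tile, or empty; each of the first four is a meld,
a pmeld, a single tile, or empty. -/
def IsPDCMP (H : Multiset Tile) (π : Fin 5 → Multiset Tile) : Prop :=
  (∑ i, π i) ≤ H ∧
  (IsPair (π 4) ∨ Multiset.card (π 4) ≤ 1) ∧
  (∀ i : Fin 5, (i : ℕ) < 4 →
    IsMeld (π i) ∨ IsPmeld (π i) ∨ Multiset.card (π i) ≤ 1)

/-- A pDCMP is completable if some decomposition (four melds and a pair, using
each tile at most 4 times in total) is finer than it. -/
def PDCompletable (π : Fin 5 → Multiset Tile) : Prop :=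
  ∃ ρ : Fin 5 → Multiset Tile, (∀ i, π i ≤ ρ i) ∧
    (∀ i : Fin 5, (i : ℕ) < 4 → IsMeld (ρ i)) ∧ IsPair (ρ 4) ∧
    (∀ t : Tile, (∑ i, ρ i).count t ≤ 4)

/-- The cost of a pDCMP: the number of missing tiles needed to complete it;
infinite if it is incompletable. -/
noncomputable def pdCost (π : Fin 5 → Multiset Tile) : ℕ∞ :=
  if PDCompletable π then ((14 - ∑ i, Multiset.card (π i) : ℕ) : ℕ∞) else ⊤

/-- A pmeld `s` is completable under `KB` if `KB` has a tile completing it into a meld. -/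
def CompletablePmeld (KB : Tile → ℕ) (s : Multiset Tile) : Prop :=
  ∃ t : Tile, 0 < KB t ∧ IsMeld (t ::ₘ s)

/-- A quasi-decomposition (qDCMP) of `H` under `KB`: at most five pairwise disjoint
sub-multisets of `H`, each a meld, pair, or pchow; every pchow completable under `KB`;
at most one incompletable pair; and containing a pair if it has five elements. -/
def IsQDCMP (KB : Tile → ℕ) (H : Multiset Tile) (π : Multiset (Multiset Tile)) : Prop :=
  Multiset.card π ≤ 5 ∧
  π.sum ≤ H ∧
  (∀ s ∈ π, IsMeld s ∨ IsPair s ∨ IsPchow s) ∧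
  (∀ s ∈ π, IsPchow s → CompletablePmeld KB s) ∧
  Multiset.card (π.filter fun s => IsPair s ∧ ¬ CompletablePmeld KB s) ≤ 1 ∧
  (Multiset.card π = 5 → ∃ s ∈ π, IsPair s)

/-- The remainder of `π` in `H`: the tiles of `H` not used by `π`. -/
def remainderOf (H : Multiset Tile) (π : Multiset (Multiset Tile)) : Multiset Tile :=
  H - π.sum

/-- A completion scheme `P` for a qDCMP `π` of `H` under `KB`: five groups, each a
base plus tiles borrowed from `KB`; every part of `π` is a base; every other base is
a seed of at most one tile recycled from the remainder; borrowed tiles respect the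
multiplicities of `KB`; the groups form four melds and one pair (the eye). -/
def IsQCompletion (KB : Tile → ℕ) (H : Multiset Tile) (π : Multiset (Multiset Tile))
    (P : Multiset (Multiset Tile × Multiset Tile)) : Prop :=
  Multiset.card P = 5 ∧
  π ≤ P.map Prod.fst ∧
  (∀ s ∈ P.map Prod.fst - π, Multiset.card s ≤ 1) ∧
  (P.map Prod.fst - π).sum ≤ remainderOf H π ∧
  (∀ t : Tile, ((P.map Prod.snd).sum).count t ≤ KB t) ∧
  (∃ q ∈ P, IsPair (q.1 + q.2) ∧ ∀ r ∈ P.erase q, IsMeld (r.1 + r.2))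

/-- The cost of a qDCMP under `KB`: the minimum number of tiles borrowed from `KB`
over all completion schemes (⊤ if `π` is incompletable). -/
noncomputable def qCost (KB : Tile → ℕ) (H : Multiset Tile)
    (π : Multiset (Multiset Tile)) : ℕ∞ :=
  sInf {c : ℕ∞ | ∃ P : Multiset (Multiset Tile × Multiset Tile),
    IsQCompletion KB H π P ∧ c = (Multiset.card (P.map Prod.snd).sum : ℕ∞)}

/-- `m`: the number of melds in `π`. -/
noncomputable def attrM (π : Multiset (Multiset Tile)) : ℕ :=
  Multiset.card (π.filter IsMeld)

/-- `n`: the number of pmelds (pchows and pairs) in `π`. -/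
noncomputable def attrN (π : Multiset (Multiset Tile)) : ℕ :=
  Multiset.card (π.filter IsPmeld)

/-- `p`: the number of pairs in `π`. -/
noncomputable def attrP (π : Multiset (Multiset Tile)) : ℕ :=
  Multiset.card (π.filter IsPair)

/-- `e`: the number of pairs in `π` incompletable under `KB`. -/
noncomputable def attrE (KB : Tile → ℕ) (π : Multiset (Multiset Tile)) : ℕ :=
  Multiset.card (π.filter fun s => IsPair s ∧ ¬ CompletablePmeld KB s)

/-- `re = 1` iff the remainder has a tile with an identical copy in `KB`. -/
noncomputable def attrRe (KB : Tile → ℕ) (H : Multiset Tile)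
    (π : Multiset (Multiset Tile)) : ℕ :=
  if ∃ t ∈ remainderOf H π, 0 < KB t then 1 else 0

/-- A tile `t` can be extended into a meld using two tiles available in `KB`. -/
def CanStartMeld (KB : Tile → ℕ) (t : Tile) : Prop :=
  ∃ v : Multiset Tile, Multiset.card v = 2 ∧ (∀ s : Tile, v.count s ≤ KB s) ∧
    IsMeld (t ::ₘ v)

/-- `rm = 1` iff the remainder has a tile that can evolve into a meld given `KB`. -/
noncomputable def attrRm (KB : Tile → ℕ) (H : Multiset Tile)
    (π : Multiset (Multiset Tile)) : ℕ :=
  if ∃ t ∈ remainderOf H π, CanStartMeld KB t then 1 else 0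

/-- One can simultaneously start the eye from one tile of `R` and a meld from another
tile of `R`, jointly respecting the multiplicities of `KB`. -/
def CanEyeAndMeld (KB : Tile → ℕ) (R : Multiset Tile) : Prop :=
  ∃ (t₁ t₂ : Tile) (u v : Multiset Tile),
    t₁ ::ₘ ({t₂} : Multiset Tile) ≤ R ∧ Multiset.card u = 1 ∧ Multiset.card v = 2 ∧
    (∀ s : Tile, (u + v).count s ≤ KB s) ∧ IsPair (t₁ ::ₘ u) ∧ IsMeld (t₂ ::ₘ v)

/-- `em = 1` iff `e = 0`, `re = rm = 1`, and there is an eye-meld conflict. -/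
noncomputable def attrEm (KB : Tile → ℕ) (H : Multiset Tile)
    (π : Multiset (Multiset Tile)) : ℕ :=
  if attrE KB π = 0 ∧ attrRe KB H π = 1 ∧ attrRm KB H π = 1 ∧
      ¬ CanEyeAndMeld KB (remainderOf H π) then 1 else 0

/-- `ke = 1` iff the knowledge base contains a pair. -/
noncomputable def kbKe (KB : Tile → ℕ) : ℕ :=
  if ∃ t : Tile, 2 ≤ KB t then 1 else 0

/-- `km = 1` iff the knowledge base contains a meld. -/
noncomputable def kbKm (KB : Tile → ℕ) : ℕ :=
  if ∃ s : Multiset Tile, IsMeld s ∧ ∀ t : Tile, s.count t ≤ KB t then 1 else 0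

/-- Two tiles are KB-connected (w.r.t. `H` and `KB`): equal, or some tile of `H` or
`KB` makes a chow together with them. -/
def KBConn (KB : Tile → ℕ) (H : Multiset Tile) (t t' : Tile) : Prop :=
  t = t' ∨ ∃ u : Tile, (u ∈ H ∨ 0 < KB u) ∧ IsChow {t, t', u}

/-- A KB-block of `H`: a nonempty monochromatic sub-multiset of `H`, closed under
KB-connection within `H` (with full multiplicities) and KB-connected within `H`. -/
def IsKBBlock (KB : Tile → ℕ) (H : Multiset Tile) (b : Multiset Tile) : Prop :=
  b ≠ 0 ∧ b ≤ H ∧ (∃ c : Fin 3, ∀ t ∈ b, t.1 = c) ∧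
  (∀ t ∈ b, ∀ t' : Tile, KBConn KB H t t' → H.count t' ≤ b.count t') ∧
  (∀ t ∈ b, ∀ t' ∈ b,
    Relation.ReflTransGen (fun x y : Tile => y ∈ H ∧ KBConn KB H x y) t t')

/-- The restriction `π↓b` of a qDCMP `π` to a block `b`: the melds and pmelds of `π`
contained in `b`. -/
noncomputable def restrictQ (π : Multiset (Multiset Tile)) (b : Multiset Tile) :
    Multiset (Multiset Tile) :=
  π.filter fun s => s ≤ b

/-- The `Decide` function: the cost assigned to a (global) type, where 100 plays the
role of infinity. -/
noncomputable def Decide (m n p e re rm em ke km : ℕ) : ℕ :=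
  if (p = 0 ∧ re = 0 ∧ ke = 0) ∨
     (m + n ≤ 4 ∧ re = 0 ∧ ke = 0 ∧ rm = 0 ∧ km = 0) ∨
     (m + n ≤ 3 + e ∧ rm = 0 ∧ km = 0) ∨
     (m + n ≤ 3 ∧ p = 0 ∧ ke = 0 ∧ km = 0 ∧ em = 1) then 100
  else if 4 < m + n then 4 - m
  else if m + n = 4 then
    if (e = 0 ∧ re = 1) ∨ (0 < p ∧ rm = 1) then 4 - m + 1 else 4 - m + 2
  else
    if e = 1 then (n - 1) + (2 * rm + 3 * (1 - rm)) * (4 - m - n + 1)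
    else if p = 0 then
      n + (2 * rm + 3 * (1 - rm)) * (4 - m - n) + (re + 2 * (1 - re)) + em
    else
      min (n + (2 * rm + 3 * (1 - rm)) * (4 - m - n) + (re + 2 * (1 - re)))
          (n - 1 + (2 * rm + 3 * (1 - rm)) * (4 - m - n + 1))

/-- The value returned by the block deficiency algorithm: the minimum, over all
choices of one local qDCMP per KB-block (whose joined global type is not discarded),
of the cost `Decide` assigns to the joined global type. -/
noncomputable def blockDfncy (KB : Tile → ℕ) (H : Multiset Tile)
    (B : Finset (Multiset Tile)) : ℕ :=
  sInf {c : ℕ | ∃ f : Multiset Tile → Multiset (Multiset Tile),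
    (∀ b ∈ B, IsQDCMP KB b (f b)) ∧
    (∑ b ∈ B, attrE KB (f b)) ≤ 1 ∧
    (∑ b ∈ B, attrM (f b)) + (∑ b ∈ B, attrN (f b)) ≤ 5 ∧
    ¬((∑ b ∈ B, attrM (f b)) + (∑ b ∈ B, attrN (f b)) = 5 ∧
       (∑ b ∈ B, attrP (f b)) = 0) ∧
    c = Decide (∑ b ∈ B, attrM (f b)) (∑ b ∈ B, attrN (f b))
          (∑ b ∈ B, attrP (f b)) (∑ b ∈ B, attrE KB (f b))
          (B.sup fun b => attrRe KB b (f b)) (B.sup fun b => attrRm KB b (f b))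
          (if ∃ b ∈ B, attrEm KB b (f b) = 1 ∧
              ∀ b' ∈ B, b' ≠ b → attrRe KB b' (f b') = 0 ∧ attrRm KB b' (f b') = 0
           then 1 else 0)
          (kbKe KB) (kbKm KB)}


section Lemmas

variable {KB : Tile → ℕ} {H : Multiset Tile}

lemma chow_card {s : Multiset Tile} (h : IsChow s) : Multiset.card s = 3 := by
  obtain ⟨c, i, j, k, -, -, rfl⟩ := h; rfl

lemma chow_color {s : Multiset Tile} (h : IsChow s) : ∃ c, ∀ t ∈ s, t.1 = c := by
  obtain ⟨c, i, j, k, -, -, rfl⟩ := h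
  refine ⟨c, ?_⟩
  intro t ht
  simp only [Multiset.insert_eq_cons, Multiset.mem_cons, Multiset.mem_singleton] at ht
  rcases ht with rfl | rfl | rfl <;> rfl

lemma chow_pick {s : Multiset Tile} (h : IsChow s) {t t' : Tile}
    (ht : t ∈ s) (ht' : t' ∈ s) (hne : t ≠ t') :
    ∃ u ∈ s, s = {t, t', u} := by
  have h3 := chow_card h
  have h1 : s = t ::ₘ s.erase t := (Multiset.cons_erase ht).symm
  have ht'e : t' ∈ s.erase t := (Multiset.mem_erase_of_ne fun h => hne h.symm).2 ht'
  have h2 : s.erase t = t' ::ₘ (s.erase t).erase t' := (Multiset.cons_erase ht'e).symm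
  have he1 : Multiset.card (s.erase t) = 2 := by
    rw [Multiset.card_erase_of_mem ht, h3]; rfl
  have hc : Multiset.card ((s.erase t).erase t') = 1 := by
    rw [Multiset.card_erase_of_mem ht'e, he1]; rfl
  obtain ⟨u, hu⟩ := Multiset.card_eq_one.1 hc
  refine ⟨u, ?_, ?_⟩
  · rw [h1, h2, hu]
    simp [Multiset.mem_cons]
  · rw [h1, h2, hu]; rfl

lemma kbconn_symm {t t' : Tile} (h : KBConn KB H t t') : KBConn KB H t' t := by
  rcases h with rfl | ⟨u, hu, hc⟩
  · exact Or.inl rfl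
  · exact Or.inr ⟨u, hu, by rwa [show ({t', t, u} : Multiset Tile) = {t, t', u} from
      Multiset.cons_swap t' t {u}]⟩

lemma kbconn_color {t t' : Tile} (h : KBConn KB H t t') : t.1 = t'.1 := by
  rcases h with rfl | ⟨u, -, hc⟩
  · rfl
  · obtain ⟨c, hc'⟩ := chow_color hc
    rw [hc' t (by simp), hc' t' (by simp)]

/-- All tiles of a part of a qDCMP are pairwise KB-connected. -/
lemma part_conn {s : Multiset Tile} (hsH : s ≤ H)
    (hk : IsMeld s ∨ IsPair s ∨ IsPchow s)
    (hcp : IsPchow s → CompletablePmeld KB s) :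
    ∀ t ∈ s, ∀ t' ∈ s, KBConn KB H t t' := by
  intro t ht t' ht'
  by_cases hne : t = t'
  · exact Or.inl hne
  rcases hk with (⟨w, rfl⟩ | hch) | ⟨w, rfl⟩ | hpc
  · -- pong
    simp only [Multiset.insert_eq_cons, Multiset.mem_cons, Multiset.mem_singleton] at ht ht'
    exact absurd (by rcases ht with rfl|rfl|rfl <;> rcases ht' with rfl|rfl|rfl <;> rfl) hne
  · -- chow
    obtain ⟨u, hu, hs⟩ := chow_pick hch ht ht' hne
    exact Or.inr ⟨u, Or.inl (Multiset.mem_of_le hsH hu), by rwa [← hs]⟩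
  · -- pair
    simp only [Multiset.insert_eq_cons, Multiset.mem_cons, Multiset.mem_singleton] at ht ht'
    exact absurd (by rcases ht with rfl|rfl <;> rcases ht' with rfl|rfl <;> rfl) hne
  · -- pchow
    obtain ⟨w, hw, hm⟩ := hcp hpc
    rcases hm with ⟨x, hx⟩ | hch
    · have hts : t ∈ w ::ₘ s := Multiset.mem_cons_of_mem ht
      have ht's : t' ∈ w ::ₘ s := Multiset.mem_cons_of_mem ht'
      rw [hx] at hts ht's
      simp only [Multiset.insert_eq_cons, Multiset.mem_cons, Multiset.mem_singleton] at hts ht's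
      exact absurd (by rcases hts with rfl|rfl|rfl <;> rcases ht's with rfl|rfl|rfl <;> rfl) hne
    · obtain ⟨u, hu, hs⟩ := chow_pick hch (Multiset.mem_cons_of_mem ht)
        (Multiset.mem_cons_of_mem ht') hne
      refine Or.inr ⟨u, ?_, by rwa [← hs]⟩
      rcases Multiset.mem_cons.1 hu with rfl | hu
      · exact Or.inr hw
      · exact Or.inl (Multiset.mem_of_le hsH hu)

lemma part_nonempty {s : Multiset Tile} (hk : IsMeld s ∨ IsPair s ∨ IsPchow s) : s ≠ 0 := by
  rcases hk with (⟨w, rfl⟩ | hch) | ⟨w, rfl⟩ | ⟨w, hch⟩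
  · intro h; have := congrArg Multiset.card h; simp at this
  · intro h; rw [h] at hch; have := chow_card hch; simp at this
  · intro h; have := congrArg Multiset.card h; simp at this
  · intro h; rw [h] at hch; have := chow_card hch; simp at this


lemma mem_msum {α : Type*} {π : Multiset (Multiset α)} {a : α} :
    a ∈ π.sum ↔ ∃ s ∈ π, a ∈ s := by
  induction π using Multiset.induction_on with
  | empty => simp
  | cons s π ih => simp [Multiset.sum_cons, ih, or_and_right, exists_or]

end Lemmas
section Blocks

variable {KB : Tile → ℕ} {H : Multiset Tile}

/-- The connectivity step relation used in blocks. -/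
def BStep (KB : Tile → ℕ) (H : Multiset Tile) (x y : Tile) : Prop :=
  y ∈ H ∧ KBConn KB H x y

lemma bstep_mem {t x : Tile} (ht : t ∈ H)
    (h : Relation.ReflTransGen (BStep KB H) t x) : x ∈ H := by
  induction h with
  | refl => exact ht
  | tail _ step _ => exact step.1

lemma bstep_symm {t x : Tile} (ht : t ∈ H)
    (h : Relation.ReflTransGen (BStep KB H) t x) :
    Relation.ReflTransGen (BStep KB H) x t := by
  induction h with
  | refl => exact Relation.ReflTransGen.refl
  | @tail y x h step ih =>
    exact Relation.ReflTransGen.head ⟨bstep_mem ht h, kbconn_symm step.2⟩ ih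

lemma block_count {b : Multiset Tile} (hb : IsKBBlock KB H b) {t : Tile} (ht : t ∈ b) :
    b.count t = H.count t :=
  le_antisymm (Multiset.le_iff_count.1 hb.2.1 t) (hb.2.2.2.1 t ht t (Or.inl rfl))

lemma block_closed {b : Multiset Tile} (hb : IsKBBlock KB H b) {t t' : Tile}
    (ht : t ∈ b) (ht' : t' ∈ H) (hc : KBConn KB H t t') : t' ∈ b := by
  have := hb.2.2.2.1 t ht t' hc
  exact Multiset.count_pos.1 (lt_of_lt_of_le (Multiset.count_pos.2 ht') this)

lemma block_disjoint {b b' : Multiset Tile} (hb : IsKBBlock KB H b)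
    (hb' : IsKBBlock KB H b') {t : Tile} (ht : t ∈ b) (ht' : t ∈ b') : b = b' := by
  have key : ∀ {c c' : Multiset Tile}, IsKBBlock KB H c → IsKBBlock KB H c' →
      t ∈ c → t ∈ c' → c' ≤ c := by
    intro c c' hc hc' htc htc'
    have hmem : ∀ x ∈ c', x ∈ c := by
      intro x hx
      have hconn := hc'.2.2.2.2 t htc' x hx
      clear hx
      induction hconn with
      | refl => exact htc
      | tail _ step ih => exact block_closed hc ih step.1 step.2
    rw [Multiset.le_iff_count]
    intro x
    by_cases hx : x ∈ c'
    · rw [block_count hc' hx, ← block_count hc (hmem x hx)]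
    · rw [Multiset.count_eq_zero.2 hx]; exact Nat.zero_le _
  exact le_antisymm (key hb' hb ht' ht) (key hb hb' ht ht')

lemma block_exists {t : Tile} (ht : t ∈ H) : ∃ b, IsKBBlock KB H b ∧ t ∈ b := by
  classical
  refine ⟨H.filter (Relation.ReflTransGen (BStep KB H) t), ?_, ?_⟩
  · refine ⟨?_, Multiset.filter_le _ _, ⟨t.1, ?_⟩, ?_, ?_⟩
    · intro h0
      have : t ∈ H.filter (Relation.ReflTransGen (BStep KB H) t) :=
        Multiset.mem_filter.2 ⟨ht, Relation.ReflTransGen.refl⟩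
      rw [h0] at this; exact absurd this (Multiset.notMem_zero t)
    · intro x hx
      have hr := (Multiset.mem_filter.1 hx).2
      clear hx
      induction hr with
      | refl => rfl
      | tail _ step ih => rw [← kbconn_color step.2]; exact ih
    · intro x hx t' hc
      have hr := (Multiset.mem_filter.1 hx).2
      by_cases ht' : t' ∈ H
      · have : Relation.ReflTransGen (BStep KB H) t t' := hr.tail ⟨ht', hc⟩
        rw [Multiset.count_filter, if_pos this]
      · rw [Multiset.count_eq_zero.2 ht']; exact Nat.zero_le _
    · intro x hx x' hx'
      have hrx := (Multiset.mem_filter.1 hx).2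
      have hrx' := (Multiset.mem_filter.1 hx').2
      have hsub : ∀ {y z : Tile}, Relation.ReflTransGen (BStep KB H) y z →
          Relation.ReflTransGen (fun a c : Tile => c ∈ H ∧ KBConn KB H a c) y z := fun h => h
      exact hsub ((bstep_symm ht hrx).trans hrx')
  · exact Multiset.mem_filter.2 ⟨ht, Relation.ReflTransGen.refl⟩

end Blocks
section Split

variable {KB : Tile → ℕ} {H : Multiset Tile} {B : Finset (Multiset Tile)}
  {π : Multiset (Multiset Tile)}

/-- Every part of a qDCMP lies in exactly one block. -/
lemma part_block (hB : ∀ b, b ∈ B ↔ IsKBBlock KB H b) (hpi : IsQDCMP KB H π) :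
    ∀ s ∈ π, ∃ b ∈ B, s ≤ b ∧ ∀ b' ∈ B, s ≤ b' → b' = b := by
  intro s hs
  have hsH : s ≤ H := le_trans (Multiset.le_sum_of_mem hs) hpi.2.1
  have hk := hpi.2.2.1 s hs
  have hcp := hpi.2.2.2.1 s hs
  obtain ⟨t, ht⟩ := Multiset.exists_mem_of_ne_zero (part_nonempty hk)
  obtain ⟨b, hbB, htb⟩ := block_exists (Multiset.mem_of_le hsH ht)
  refine ⟨b, (hB b).2 hbB, ?_, ?_⟩
  · rw [Multiset.le_iff_count]
    intro x
    by_cases hx : x ∈ s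
    · have hxb : x ∈ b := block_closed hbB htb (Multiset.mem_of_le hsH hx)
        (part_conn hsH hk hcp t ht x hx)
      rw [block_count hbB hxb]
      exact Multiset.le_iff_count.1 hsH x
    · rw [Multiset.count_eq_zero.2 hx]; exact Nat.zero_le _
  · intro b' hb'B hsb'
    exact block_disjoint ((hB b').1 hb'B) hbB (Multiset.mem_of_le hsb' ht) htb

/-- Splitting a filtered count over the blocks. -/
lemma card_filter_sum (B : Finset (Multiset Tile)) (Q : Multiset Tile → Prop)
    [DecidablePred Q] (π : Multiset (Multiset Tile))
    (h : ∀ s ∈ π, ∃ b ∈ B, s ≤ b ∧ ∀ b' ∈ B, s ≤ b' → b' = b) :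
    Multiset.card (π.filter Q) =
      ∑ b ∈ B, Multiset.card ((restrictQ π b).filter Q) := by
  unfold restrictQ
  induction π using Multiset.induction_on with
  | empty => simp
  | cons a π ih =>
    obtain ⟨b0, hb0B, hab0, huniq⟩ := h a (Multiset.mem_cons_self a π)
    have ih' := ih (fun s hs => h s (Multiset.mem_cons_of_mem hs))
    rw [Multiset.filter_cons, Multiset.card_add, ih']
    have hterm : ∀ b ∈ B,
        Multiset.card (Multiset.filter Q (Multiset.filter (fun s => s ≤ b) (a ::ₘ π))) =
        (if Q a ∧ a ≤ b then 1 else 0) +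
          Multiset.card (Multiset.filter Q (Multiset.filter (fun s => s ≤ b) π)) := by
      intro b _
      rw [Multiset.filter_cons, Multiset.filter_add, Multiset.card_add]
      congr 1
      by_cases hab : a ≤ b
      · rw [if_pos hab, Multiset.filter_singleton]
        by_cases hq : Q a
        · rw [if_pos hq, if_pos ⟨hq, hab⟩]; rfl
        · rw [if_neg hq, if_neg (fun hc => hq hc.1)]; rfl
      · rw [if_neg hab, if_neg (fun hc => hab hc.2), Multiset.filter_zero,
          Multiset.card_zero]
    rw [Finset.sum_congr rfl hterm, Finset.sum_add_distrib]
    have hsingle : ∑ b ∈ B, (if Q a ∧ a ≤ b then 1 else 0) = (if Q a then 1 else 0) := by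
      rw [Finset.sum_eq_single_of_mem b0 hb0B]
      · by_cases hq : Q a
        · rw [if_pos ⟨hq, hab0⟩, if_pos hq]
        · rw [if_neg (fun hc => hq hc.1), if_neg hq]
      · intro b hbB hbne
        exact if_neg (fun hc => hbne (huniq b hbB hc.2))
    rw [hsingle]
    have hcard : Multiset.card (if Q a then ({a} : Multiset (Multiset Tile)) else 0) =
        (if Q a then 1 else 0) := by split_ifs <;> rfl
    omega

/-- The count of a tile of a block in the global remainder equals its count in the
block remainder. -/
lemma remainder_count (hB : ∀ b, b ∈ B ↔ IsKBBlock KB H b) (hpi : IsQDCMP KB H π)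
    {b : Multiset Tile} (hbB : b ∈ B) {t : Tile} (htb : t ∈ b) :
    (remainderOf b (restrictQ π b)).count t = (remainderOf H π).count t := by
  classical
  have hbblk := (hB b).1 hbB
  have hsplit : Multiset.filter (fun s => s ≤ b) π +
      Multiset.filter (fun s => ¬ s ≤ b) π = π := Multiset.filter_add_not _ _
  have hτ : ((Multiset.filter (fun s => ¬ s ≤ b) π).sum).count t = 0 := by
    rw [Multiset.count_eq_zero]
    intro htτ
    obtain ⟨s, hsf, hts⟩ := mem_msum.1 htτ
    have hsπ := Multiset.mem_of_mem_filter hsf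
    have hnle := (Multiset.mem_filter.1 hsf).2
    obtain ⟨b'', hb''B, hsb'', -⟩ := part_block hB hpi s hsπ
    have : b'' = b := block_disjoint ((hB b'').1 hb''B) hbblk
      (Multiset.mem_of_le hsb'' hts) htb
    exact hnle (this ▸ hsb'')
  have hsum : (π.sum).count t = ((restrictQ π b).sum).count t := by
    conv_lhs => rw [← hsplit]
    rw [Multiset.sum_add, Multiset.count_add, hτ]
    rfl
  unfold remainderOf
  rw [Multiset.count_sub, Multiset.count_sub, block_count hbblk htb, hsum]

end Split
section Remainder

variable {KB : Tile → ℕ} {H : Multiset Tile} {B : Finset (Multiset Tile)}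
  {π : Multiset (Multiset Tile)}

lemma remainder_le_block {b : Multiset Tile} :
    remainderOf b (restrictQ π b) ≤ b := Multiset.sub_le_self _ _

lemma remainder_le_hand : remainderOf H π ≤ H := Multiset.sub_le_self _ _

lemma block_remainder_le (hB : ∀ b, b ∈ B ↔ IsKBBlock KB H b) (hpi : IsQDCMP KB H π)
    {b : Multiset Tile} (hbB : b ∈ B) :
    remainderOf b (restrictQ π b) ≤ remainderOf H π := by
  rw [Multiset.le_iff_count]
  intro x
  by_cases hx : x ∈ remainderOf b (restrictQ π b)
  · have hxb : x ∈ b := Multiset.mem_of_le remainder_le_block hx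
    rw [remainder_count hB hpi hbB hxb]
  · rw [Multiset.count_eq_zero.2 hx]; exact Nat.zero_le _

lemma mem_remainder_iff (hB : ∀ b, b ∈ B ↔ IsKBBlock KB H b) (hpi : IsQDCMP KB H π)
    {t : Tile} : t ∈ remainderOf H π ↔ ∃ b ∈ B, t ∈ remainderOf b (restrictQ π b) := by
  constructor
  · intro ht
    obtain ⟨b, hbblk, htb⟩ := block_exists (Multiset.mem_of_le remainder_le_hand ht)
    refine ⟨b, (hB b).2 hbblk, ?_⟩
    rw [← Multiset.count_pos] at ht ⊢
    rwa [remainder_count hB hpi ((hB b).2 hbblk) htb]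
  · rintro ⟨b, hbB, htb⟩
    exact Multiset.mem_of_le (block_remainder_le hB hpi hbB) htb

/-- Eye from one block, meld from a different block: joint completion possible. -/
lemma eye_meld_cross (hB : ∀ b, b ∈ B ↔ IsKBBlock KB H b) (hpi : IsQDCMP KB H π)
    {b1 b2 : Multiset Tile} (hb1 : b1 ∈ B) (hb2 : b2 ∈ B) (hne : b1 ≠ b2)
    {t1 t2 : Tile} (ht1 : t1 ∈ remainderOf b1 (restrictQ π b1)) (hKB1 : 0 < KB t1)
    (ht2 : t2 ∈ remainderOf b2 (restrictQ π b2))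
    {v : Multiset Tile} (hv : Multiset.card v = 2) (hvKB : ∀ s, v.count s ≤ KB s)
    (hmeld : IsMeld (t2 ::ₘ v)) : CanEyeAndMeld KB (remainderOf H π) := by
  have hb1blk := (hB b1).1 hb1
  have hb2blk := (hB b2).1 hb2
  have ht1b : t1 ∈ b1 := Multiset.mem_of_le remainder_le_block ht1
  have ht2b : t2 ∈ b2 := Multiset.mem_of_le remainder_le_block ht2
  have htne : t1 ≠ t2 := by
    rintro rfl
    exact hne (block_disjoint hb1blk hb2blk ht1b ht2b)
  have ht1H : t1 ∈ H := Multiset.mem_of_le hb1blk.2.1 ht1b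
  -- t1 does not occur in v
  have hnv : v.count t1 = 0 := by
    rw [Multiset.count_eq_zero]
    intro ht1v
    rcases hmeld with ⟨w, hw⟩ | hch
    · -- pong: everything equals w
      have h2 : t2 ∈ t2 ::ₘ v := Multiset.mem_cons_self _ _
      have h1 : t1 ∈ t2 ::ₘ v := Multiset.mem_cons_of_mem ht1v
      rw [hw] at h1 h2
      simp only [Multiset.insert_eq_cons, Multiset.mem_cons, Multiset.mem_singleton] at h1 h2
      apply htne
      rcases h1 with rfl|rfl|rfl <;> rcases h2 with h2|h2|h2 <;> rw [h2]
    · obtain ⟨u, hu, hs⟩ := chow_pick hch (Multiset.mem_cons_self t2 v)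
        (Multiset.mem_cons_of_mem ht1v) (fun h => htne h.symm)
      have hveq : v = t1 ::ₘ {u} := by
        have : t2 ::ₘ v = t2 ::ₘ (t1 ::ₘ {u}) := hs
        exact (Multiset.cons_inj_right t2).1 this
      have huv : u ∈ v := by rw [hveq]; simp
      have hKBu : 0 < KB u := lt_of_lt_of_le (Multiset.count_pos.2 huv) (hvKB u)
      have hconn : KBConn KB H t2 t1 := Or.inr ⟨u, Or.inr hKBu, by rw [← hs]; exact hch⟩
      exact hne (block_disjoint hb1blk hb2blk ht1b
        (block_closed hb2blk ht2b ht1H hconn))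
  refine ⟨t1, t2, {t1}, v, ?_, rfl, hv, ?_, ⟨t1, rfl⟩, hmeld⟩
  · rw [Multiset.le_iff_count]
    intro x
    have hc1 : (remainderOf H π).count t1 = (remainderOf b1 (restrictQ π b1)).count t1 :=
      (remainder_count hB hpi hb1 ht1b).symm
    have hc2 : (remainderOf H π).count t2 = (remainderOf b2 (restrictQ π b2)).count t2 :=
      (remainder_count hB hpi hb2 ht2b).symm
    by_cases hx1 : x = t1
    · have hcount : (t1 ::ₘ ({t2} : Multiset Tile)).count x = 1 := by
        rw [hx1, Multiset.count_cons_self, Multiset.count_singleton, if_neg htne]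
      rw [hcount, hx1, hc1]
      exact Multiset.count_pos.2 ht1
    · by_cases hx2 : x = t2
      · have hcount : (t1 ::ₘ ({t2} : Multiset Tile)).count x = 1 := by
          rw [Multiset.count_cons_of_ne hx1, hx2, Multiset.count_singleton, if_pos rfl]
        rw [hcount, hx2, hc2]
        exact Multiset.count_pos.2 ht2
      · have hcount : (t1 ::ₘ ({t2} : Multiset Tile)).count x = 0 := by
          rw [Multiset.count_cons_of_ne hx1, Multiset.count_singleton, if_neg hx2]
        rw [hcount]; exact Nat.zero_le _
  · intro s
    rw [Multiset.count_add]
    by_cases hs : s = t1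
    · subst hs
      rw [Multiset.count_singleton, if_pos rfl, hnv]
      exact hKB1
    · rw [Multiset.count_singleton, if_neg hs, Nat.zero_add]
      exact hvKB s

end Remainder
section Attr

variable {KB : Tile → ℕ} {H : Multiset Tile} {B : Finset (Multiset Tile)}
  {π : Multiset (Multiset Tile)}

lemma attrRe_eq_one_iff {X : Multiset Tile} {ρ : Multiset (Multiset Tile)} :
    attrRe KB X ρ = 1 ↔ ∃ t ∈ remainderOf X ρ, 0 < KB t := by
  unfold attrRe; split_ifs with h
  · exact iff_of_true rfl h
  · exact ⟨fun h0 => h0.elim, fun hc => absurd hc h⟩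

lemma attrRm_eq_one_iff {X : Multiset Tile} {ρ : Multiset (Multiset Tile)} :
    attrRm KB X ρ = 1 ↔ ∃ t ∈ remainderOf X ρ, CanStartMeld KB t := by
  unfold attrRm; split_ifs with h
  · exact iff_of_true rfl h
  · exact ⟨fun h0 => h0.elim, fun hc => absurd hc h⟩

lemma attrEm_eq_one_iff {X : Multiset Tile} {ρ : Multiset (Multiset Tile)} :
    attrEm KB X ρ = 1 ↔ (attrE KB ρ = 0 ∧ attrRe KB X ρ = 1 ∧ attrRm KB X ρ = 1 ∧
      ¬ CanEyeAndMeld KB (remainderOf X ρ)) := by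
  unfold attrEm; split_ifs with h
  · exact iff_of_true rfl h
  · exact ⟨fun h0 => h0.elim, fun hc => absurd hc h⟩

lemma canEM_mono {R R' : Multiset Tile} (hle : R ≤ R')
    (h : CanEyeAndMeld KB R) : CanEyeAndMeld KB R' := by
  obtain ⟨t1, t2, u, v, h1, h2, h3, h4, h5, h6⟩ := h
  exact ⟨t1, t2, u, v, le_trans h1 hle, h2, h3, h4, h5, h6⟩

lemma pair_u {t : Tile} {u : Multiset Tile} (hp : IsPair (t ::ₘ u)) : u = {t} := by
  obtain ⟨x, hx⟩ := hp
  have htx : t = x := by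
    have hm : t ∈ t ::ₘ u := Multiset.mem_cons_self _ _
    rw [hx] at hm
    simpa [Multiset.insert_eq_cons, Multiset.mem_cons, Multiset.mem_singleton] using hm
  have hu : u = (t ::ₘ u).erase t := (Multiset.erase_cons_head t u).symm
  rw [hu, hx, htx]
  simp [Multiset.insert_eq_cons, Multiset.erase_cons_head]

end Attr

/-- The type of a global qDCMP is determined by the types of its restrictions to the
KB-blocks of the hand. -/
theorem qdcmp_type_join (H : Multiset Tile) (KB : Tile → ℕ)
    (hH : IsKTile 13 H ∨ IsKTile 14 H) (hKB : IsKB KB)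
    (B : Finset (Multiset Tile)) (hB : ∀ b, b ∈ B ↔ IsKBBlock KB H b)
    (π : Multiset (Multiset Tile)) (hpi : IsQDCMP KB H π)
    (m n p e re rm em : ℕ)
    (hm : m = attrM π) (hn : n = attrN π) (hp : p = attrP π) (he : e = attrE KB π)
    (hre : re = attrRe KB H π) (hrm : rm = attrRm KB H π) (hem : em = attrEm KB H π) :
    (em = 1 ↔ e = 0 ∧ ∃ b ∈ B, attrEm KB b (restrictQ π b) = 1 ∧
        ∀ b' ∈ B, b' ≠ b → attrRe KB b' (restrictQ π b') = 0 ∧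
          attrRm KB b' (restrictQ π b') = 0 ∧ attrEm KB b' (restrictQ π b') = 0) ∧
    m = (∑ b ∈ B, attrM (restrictQ π b)) ∧
    n = (∑ b ∈ B, attrN (restrictQ π b)) ∧
    p = (∑ b ∈ B, attrP (restrictQ π b)) ∧
    e = (∑ b ∈ B, attrE KB (restrictQ π b)) ∧
    re = (B.sup fun b => attrRe KB b (restrictQ π b)) ∧
    rm = (B.sup fun b => attrRm KB b (restrictQ π b)) := by
  classical
  subst hm hn hp he hre hrm hem
  have hub := part_block hB hpi
  have hM : attrM π = ∑ b ∈ B, attrM (restrictQ π b) := by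
    unfold attrM
    exact card_filter_sum B IsMeld π hub
  have hN : attrN π = ∑ b ∈ B, attrN (restrictQ π b) := by
    unfold attrN
    exact card_filter_sum B IsPmeld π hub
  have hP : attrP π = ∑ b ∈ B, attrP (restrictQ π b) := by
    unfold attrP
    exact card_filter_sum B IsPair π hub
  have hE : attrE KB π = ∑ b ∈ B, attrE KB (restrictQ π b) := by
    unfold attrE
    exact card_filter_sum B (fun s => IsPair s ∧ ¬ CompletablePmeld KB s) π hub
  have hRe : attrRe KB H π = B.sup fun b => attrRe KB b (restrictQ π b) := by
    by_cases hc : ∃ t ∈ remainderOf H π, 0 < KB t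
    · obtain ⟨t, ht, hk⟩ := hc
      obtain ⟨b, hbB, htb⟩ := (mem_remainder_iff hB hpi).1 ht
      refine le_antisymm ?_ ?_
      · rw [attrRe_eq_one_iff.2 ⟨t, ht, hk⟩]
        calc (1 : ℕ) = attrRe KB b (restrictQ π b) := (attrRe_eq_one_iff.2 ⟨t, htb, hk⟩).symm
        _ ≤ _ := Finset.le_sup (f := fun b => attrRe KB b (restrictQ π b)) hbB
      · refine Finset.sup_le fun b' hb'B => ?_
        rw [attrRe_eq_one_iff.2 ⟨t, ht, hk⟩]
        unfold attrRe; split_ifs <;> omega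
    · have key : ∀ b ∈ B, attrRe KB b (restrictQ π b) = 0 := by
        intro b hbB
        unfold attrRe
        rw [if_neg]
        rintro ⟨t, htb, hk⟩
        exact hc ⟨t, Multiset.mem_of_le (block_remainder_le hB hpi hbB) htb, hk⟩
      unfold attrRe
      rw [if_neg hc]
      exact (Nat.le_zero.1 (Finset.sup_le fun b hbB => le_of_eq (key b hbB))).symm
  have hRm : attrRm KB H π = B.sup fun b => attrRm KB b (restrictQ π b) := by
    by_cases hc : ∃ t ∈ remainderOf H π, CanStartMeld KB t
    · obtain ⟨t, ht, hk⟩ := hc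
      obtain ⟨b, hbB, htb⟩ := (mem_remainder_iff hB hpi).1 ht
      refine le_antisymm ?_ ?_
      · rw [attrRm_eq_one_iff.2 ⟨t, ht, hk⟩]
        calc (1 : ℕ) = attrRm KB b (restrictQ π b) := (attrRm_eq_one_iff.2 ⟨t, htb, hk⟩).symm
        _ ≤ _ := Finset.le_sup (f := fun b => attrRm KB b (restrictQ π b)) hbB
      · refine Finset.sup_le fun b' hb'B => ?_
        rw [attrRm_eq_one_iff.2 ⟨t, ht, hk⟩]
        unfold attrRm; split_ifs <;> omega
    · have key : ∀ b ∈ B, attrRm KB b (restrictQ π b) = 0 := by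
        intro b hbB
        unfold attrRm
        rw [if_neg]
        rintro ⟨t, htb, hk⟩
        exact hc ⟨t, Multiset.mem_of_le (block_remainder_le hB hpi hbB) htb, hk⟩
      unfold attrRm
      rw [if_neg hc]
      exact (Nat.le_zero.1 (Finset.sup_le fun b hbB => le_of_eq (key b hbB))).symm
  refine ⟨?_, hM, hN, hP, hE, hRe, hRm⟩
  constructor
  · intro h1
    obtain ⟨hE0, hre1, hrm1, hnoem⟩ := attrEm_eq_one_iff.1 h1
    obtain ⟨t1, ht1, hKB1⟩ := attrRe_eq_one_iff.1 hre1
    obtain ⟨t2, ht2, v, hv2, hvKB, hmeld⟩ := attrRm_eq_one_iff.1 hrm1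
    obtain ⟨b1, hb1B, ht1b⟩ := (mem_remainder_iff hB hpi).1 ht1
    obtain ⟨b2, hb2B, ht2b⟩ := (mem_remainder_iff hB hpi).1 ht2
    have hbeq : b1 = b2 := by
      by_contra hne
      exact hnoem (eye_meld_cross hB hpi hb1B hb2B hne ht1b hKB1 ht2b hv2 hvKB hmeld)
    subst hbeq
    have hre0 : ∀ b' ∈ B, b' ≠ b1 → attrRe KB b' (restrictQ π b') = 0 := by
      intro b' hb'B hne'
      unfold attrRe
      rw [if_neg]
      rintro ⟨t', ht', hk'⟩
      exact hnoem (eye_meld_cross hB hpi hb'B hb1B hne' ht' hk' ht2b hv2 hvKB hmeld)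
    have hrm0 : ∀ b' ∈ B, b' ≠ b1 → attrRm KB b' (restrictQ π b') = 0 := by
      intro b' hb'B hne'
      unfold attrRm
      rw [if_neg]
      rintro ⟨t2', ht2', v', hv'2, hv'KB, hmeld'⟩
      exact hnoem (eye_meld_cross hB hpi hb1B hb'B (fun h => hne' h.symm)
        ht1b hKB1 ht2' hv'2 hv'KB hmeld')
    refine ⟨hE0, b1, hb1B, ?_, ?_⟩
    · refine attrEm_eq_one_iff.2 ⟨?_, attrRe_eq_one_iff.2 ⟨t1, ht1b, hKB1⟩,
        attrRm_eq_one_iff.2 ⟨t2, ht2b, v, hv2, hvKB, hmeld⟩, ?_⟩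
      · exact (Finset.sum_eq_zero_iff.1 (hE ▸ hE0)) b1 hb1B
      · exact fun hcem => hnoem (canEM_mono (block_remainder_le hB hpi hb1B) hcem)
    · intro b' hb'B hne'
      refine ⟨hre0 b' hb'B hne', hrm0 b' hb'B hne', ?_⟩
      unfold attrEm
      rw [if_neg]
      rintro ⟨-, hre', -, -⟩
      rw [hre0 b' hb'B hne'] at hre'
      exact zero_ne_one hre'
  · rintro ⟨hE0, b, hbB, hemb, hoth⟩
    obtain ⟨hEb, hreb, hrmb, hnoemb⟩ := attrEm_eq_one_iff.1 hemb
    obtain ⟨ta, hta, hka⟩ := attrRe_eq_one_iff.1 hreb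
    obtain ⟨tb, htb, hkb⟩ := attrRm_eq_one_iff.1 hrmb
    refine attrEm_eq_one_iff.2 ⟨hE0,
      attrRe_eq_one_iff.2 ⟨ta, Multiset.mem_of_le (block_remainder_le hB hpi hbB) hta, hka⟩,
      attrRm_eq_one_iff.2 ⟨tb, Multiset.mem_of_le (block_remainder_le hB hpi hbB) htb, hkb⟩,
      ?_⟩
    rintro ⟨t1, t2, u, v, hle, hu1, hv2, hKBuv, hpair, hmeld⟩
    have huu : u = {t1} := pair_u hpair
    have hKB1 : 0 < KB t1 := by
      have h1 : (u + v).count t1 ≤ KB t1 := hKBuv t1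
      rw [huu, Multiset.count_add, Multiset.count_singleton, if_pos rfl] at h1
      omega
    have ht1R : t1 ∈ remainderOf H π := Multiset.mem_of_le hle (Multiset.mem_cons_self _ _)
    have ht2R : t2 ∈ remainderOf H π :=
      Multiset.mem_of_le hle (Multiset.mem_cons_of_mem (Multiset.mem_singleton.2 rfl))
    obtain ⟨b1, hb1B, ht1b⟩ := (mem_remainder_iff hB hpi).1 ht1R
    obtain ⟨b2, hb2B, ht2b⟩ := (mem_remainder_iff hB hpi).1 ht2R
    have hvKB : ∀ s, v.count s ≤ KB s := by
      intro s
      have := hKBuv s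
      rw [Multiset.count_add] at this
      omega
    have hb1 : b1 = b := by
      by_contra hne
      have h0 := (hoth b1 hb1B hne).1
      have h1 := attrRe_eq_one_iff.2 ⟨t1, ht1b, hKB1⟩
      omega
    have hb2 : b2 = b := by
      by_contra hne
      have h0 := (hoth b2 hb2B hne).2.1
      have h1 := attrRm_eq_one_iff.2 ⟨t2, ht2b, v, hv2, hvKB, hmeld⟩
      omega
    rw [hb1] at ht1b
    rw [hb2] at ht2b
    apply hnoemb
    refine ⟨t1, t2, u, v, ?_, hu1, hv2, hKBuv, hpair, hmeld⟩
    rw [Multiset.le_iff_count]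
    intro x
    by_cases hx : x ∈ (t1 ::ₘ ({t2} : Multiset Tile))
    · have hxb : x ∈ b := by
        rcases Multiset.mem_cons.1 hx with rfl | hx2
        · exact Multiset.mem_of_le remainder_le_block ht1b
        · rw [Multiset.mem_singleton.1 hx2]
          exact Multiset.mem_of_le remainder_le_block ht2b
      rw [remainder_count hB hpi hbB hxb]
      exact Multiset.le_iff_count.1 hle x
    · rw [Multiset.count_eq_zero.2 hx]
      exact Nat.zero_le _
end

section
/- For a 14-tile H, if the knowledge base KB is defined by KB(t) = 4 minus the number of copies of t in H for every tile t, then the knowledge-aware deficiency equals the plain deficiency: dfncy(H, KB) = dfncy(H). -/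
attribute [local instance] Classical.propDecidable

lemma count_replaceTile (H : Multiset Tile) (t t' s : Tile) (ht : t ∈ H) :
    (replaceTile H t t').count s
      = H.count s + (if s = t' then 1 else 0) - (if s = t then 1 else 0) := by
  have h1 : 1 ≤ H.count t := Multiset.one_le_count_iff_mem.mpr ht
  simp only [replaceTile, Multiset.count_cons]
  by_cases h : s = t
  · subst h
    rw [Multiset.count_erase_self]
    by_cases h' : s = t'
    · subst h'; simp; omega
    · simp [h']
  · rw [Multiset.count_erase_of_ne h]
    by_cases h' : s = t'
    · subst h'; simp [h]
    · simp [h', h]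

lemma card_replaceTile (H : Multiset Tile) (t t' : Tile) (ht : t ∈ H) :
    Multiset.card (replaceTile H t t') = Multiset.card H := by
  have h1 : 0 < Multiset.card H := Multiset.card_pos_iff_exists_mem.mpr ⟨t, ht⟩
  simp only [replaceTile, Multiset.card_cons, Multiset.card_erase_of_mem ht]
  exact Nat.succ_pred_eq_of_pos h1

lemma kbRemove_apply (KB : Tile → ℕ) (t' s : Tile) :
    kbRemove KB t' s = if s = t' then KB t' - 1 else KB s := by
  simp [kbRemove, Function.update_apply]

lemma reachKB_to_reach {H : Multiset Tile} {KB : Tile → ℕ} {k : ℕ}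
    (h : ReachKB H KB k) : (∀ s, H.count s + KB s ≤ 4) → Reach H k := by
  induction h with
  | zero hc => exact fun _ => Reach.zero hc
  | @succ H KB l t t' ht hkb _ ih =>
    intro hcompat
    have hcnt : ∀ s, (replaceTile H t t').count s ≤ 4 := by
      intro s
      rw [count_replaceTile H t t' s ht]
      have h1 := hcompat s
      rcases eq_or_ne s t' with rfl | h
      · rcases eq_or_ne s t with rfl | h'
        · simp; omega
        · simp [h']; omega
      · rcases eq_or_ne s t with rfl | h'
        · simp [h]; omega
        · simp [h, h']; omega
    refine Reach.succ t t' ht hcnt (ih ?_)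
    intro s
    rw [count_replaceTile H t t' s ht, kbRemove_apply]
    have h1 := hcompat s
    have h3 : 1 ≤ H.count t := Multiset.one_le_count_iff_mem.mpr ht
    rcases eq_or_ne s t' with rfl | h
    · rcases eq_or_ne s t with rfl | h'
      · simp; omega
      · simp [h']; omega
    · rcases eq_or_ne s t with rfl | h'
      · simp [h]; omega
      · simp [h, h']; omega

lemma reach_to_reachKB (H' : Multiset Tile) (hc : Complete H') :
    ∀ (d : ℕ) (H : Multiset Tile) (KB : Tile → ℕ),
      Multiset.card H = Multiset.card H' →
      (∀ s, H'.count s ≤ H.count s + KB s) →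
      Multiset.card (H' - H) = d → ReachKB H KB d := by
  intro d
  induction d with
  | zero =>
    intro H KB hcard hinv hdiff
    have h0 : H' - H = 0 := Multiset.card_eq_zero.mp hdiff
    have hle : H' ≤ H := by rwa [tsub_eq_zero_iff_le] at h0
    have hEq : H' = H := Multiset.eq_of_le_of_card_le hle (le_of_eq hcard)
    rw [← hEq]
    exact ReachKB.zero hc
  | succ n ih =>
    intro H KB hcard hinv hdiff
    obtain ⟨t', ht'⟩ : ∃ t', t' ∈ H' - H := by
      apply Multiset.exists_mem_of_ne_zero
      intro h0; rw [h0] at hdiff; simp at hdiff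
    have ht'c : H.count t' < H'.count t' := by
      have := Multiset.count_pos.mpr ht'
      rw [Multiset.count_sub] at this; omega
    have hKBt' : 0 < KB t' := by have := hinv t'; omega
    obtain ⟨t, htc⟩ : ∃ t, H'.count t < H.count t := by
      by_contra hcon
      push_neg at hcon
      have hle : H ≤ H' := Multiset.le_iff_count.mpr hcon
      have hEq : H = H' := Multiset.eq_of_le_of_card_le hle (le_of_eq hcard.symm)
      rw [hEq] at ht'c; omega
    have htH : t ∈ H := by
      rw [← Multiset.count_pos]; omega
    have htne : t ≠ t' := by intro h; subst h; omega
    refine ReachKB.succ t t' htH hKBt' (ih (replaceTile H t t') (kbRemove KB t') ?_ ?_ ?_)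
    · rw [card_replaceTile H t t' htH]; exact hcard
    · intro s
      rw [count_replaceTile H t t' s htH, kbRemove_apply]
      have h1 := hinv s
      rcases eq_or_ne s t' with rfl | h
      · simp [Ne.symm htne]; omega
      · rcases eq_or_ne s t with rfl | h'
        · simp [h]; omega
        · simp [h, h']; omega
    · have hkey : H' - replaceTile H t t' = (H' - H).erase t' := by
        ext s
        rw [Multiset.count_sub, count_replaceTile H t t' s htH]
        rcases eq_or_ne s t' with rfl | h
        · rw [Multiset.count_erase_self, Multiset.count_sub]
          simp [Ne.symm htne]
          omega
        · rw [Multiset.count_erase_of_ne h, Multiset.count_sub]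
          rcases eq_or_ne s t with rfl | h'
          · simp [h]; omega
          · simp [h, h']
      rw [hkey, Multiset.card_erase_of_mem ht', hdiff]
      rfl

lemma reach_exists_complete {H : Multiset Tile} {k : ℕ} (h : Reach H k) :
    (∀ s, H.count s ≤ 4) →
    ∃ H', Complete H' ∧ Multiset.card H' = Multiset.card H ∧
      (∀ s, H'.count s ≤ 4) ∧ Multiset.card (H' - H) ≤ k := by
  induction h with
  | zero hc =>
    intro hb
    exact ⟨_, hc, rfl, hb, by simp⟩
  | @succ H l t t' ht hcnt _ ih =>
    intro hb
    obtain ⟨H', hc, hcard, hb', hd⟩ := ih hcnt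
    refine ⟨H', hc, by rw [hcard, card_replaceTile H t t' ht], hb', ?_⟩
    have hle : H' - H ≤ (H' - replaceTile H t t') + {t'} := by
      rw [Multiset.le_iff_count]
      intro s
      rw [Multiset.count_sub, Multiset.count_add, Multiset.count_sub,
        count_replaceTile H t t' s ht]
      rcases eq_or_ne s t' with rfl | h
      · simp
        rcases eq_or_ne s t with rfl | h'
        · simp; omega
        · simp [h']; omega
      · simp [Multiset.count_singleton, h]
        rcases eq_or_ne s t with rfl | h'
        · simp; omega
        · simp [h']; omega
    have hcle := Multiset.card_le_card hle
    rw [Multiset.card_add, Multiset.card_singleton] at hcle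
    omega

/-- If the knowledge base records exactly the tiles not in the hand (4 copies of
each tile minus those in `H`), the knowledge-aware deficiency equals the plain one. -/
theorem dfncyKB_eq_dfncy (H : Multiset Tile) (hH : IsKTile 14 H)
    (KB : Tile → ℕ) (hKB : ∀ t : Tile, KB t = 4 - H.count t) :
    dfncyKB H KB = dfncy H := by
  have hb : ∀ s, H.count s ≤ 4 := hH.2
  have hcompat : ∀ s, H.count s + KB s ≤ 4 := by
    intro s; rw [hKB]; have := hb s; omega
  apply le_antisymm
  · apply le_sInf
    rintro c ⟨k, hk, rfl⟩
    obtain ⟨H', hc, hcard, hb', hd⟩ := reach_exists_complete hk hb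
    have hinv : ∀ s, H'.count s ≤ H.count s + KB s := by
      intro s
      rw [hKB]
      have h1 := hb s
      have h2 := hb' s
      omega
    have hr := reach_to_reachKB H' hc (Multiset.card (H' - H)) H KB hcard.symm hinv rfl
    calc dfncyKB H KB ≤ (Multiset.card (H' - H) : ℕ∞) := sInf_le ⟨_, hr, rfl⟩
      _ ≤ (k : ℕ∞) := by exact_mod_cast hd
  · apply sInf_le_sInf
    rintro c ⟨k, hk, rfl⟩
    exact ⟨k, reachKB_to_reach hk hcompat, rfl⟩
end

section
/- If π is a quasi-decomposition of a 14-tile H under a compatible knowledge base KB and π is completable under KB, then dfncy(H, KB) ≤ cost(π, KB); in particular the existence of a zero-cost quasi-decomposition (four melds and a pair all within H) implies H is complete. -/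
attribute [local instance] Classical.propDecidable

lemma card_of_meld {s : Multiset Tile} (h : IsMeld s) : Multiset.card s = 3 := by
  rcases h with ⟨t, rfl⟩ | ⟨c, i, j, k, _, _, rfl⟩ <;> simp

lemma card_of_pair {s : Multiset Tile} (h : IsPair s) : Multiset.card s = 2 := by
  obtain ⟨t, rfl⟩ := h; simp

lemma complete_card {M : Multiset Tile} (h : Complete M) : Multiset.card M = 14 := by
  obtain ⟨ρ, hsum, hmeld, hpair⟩ := h
  have h0 := card_of_meld (hmeld 0 (by decide))
  have h1 := card_of_meld (hmeld 1 (by decide))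
  have h2 := card_of_meld (hmeld 2 (by decide))
  have h3 := card_of_meld (hmeld 3 (by decide))
  have h4 := card_of_pair hpair
  rw [← hsum, Fin.sum_univ_five]
  simp [h0, h1, h2, h3, h4]

lemma swap_lemma : ∀ (k : ℕ) (H : Multiset Tile) (KB : Tile → ℕ) (A D : Multiset Tile),
    A ≤ H → Multiset.card H = Multiset.card A + Multiset.card D →
    Multiset.card D = k → (∀ t, D.count t ≤ KB t) → Complete (A + D) →
    ReachKB H KB k := by
  intro k
  induction k with
  | zero =>
    intro H KB A D hAH hcard hD hcnt hcomp
    have hD0 : D = 0 := Multiset.card_eq_zero.mp hD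
    subst hD0
    have hAeq : A = H := Multiset.eq_of_le_of_card_le hAH (by omega)
    rw [hAeq, add_zero] at hcomp
    exact ReachKB.zero hcomp
  | succ n ih =>
    intro H KB A D hAH hcard hD hcnt hcomp
    have hDne : D ≠ 0 := by intro h; subst h; simp at hD
    obtain ⟨t', ht'⟩ := Multiset.exists_mem_of_ne_zero hDne
    have hKBt' : 0 < KB t' := lt_of_lt_of_le (Multiset.count_pos.mpr ht') (hcnt t')
    have hsubne : H - A ≠ 0 := by
      intro h
      have hc := Multiset.card_sub hAH
      rw [h] at hc
      simp at hc
      omega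
    obtain ⟨t, ht⟩ := Multiset.exists_mem_of_ne_zero hsubne
    have htH : t ∈ H := Multiset.mem_of_le (Multiset.sub_le_self _ _) ht
    have htcnt : Multiset.count t A < Multiset.count t H := by
      have h1 : 0 < Multiset.count t (H - A) := Multiset.count_pos.mpr ht
      rw [Multiset.count_sub] at h1
      omega
    have hAe : A ≤ H.erase t := by
      rw [Multiset.le_iff_count]
      intro s
      rcases eq_or_ne s t with rfl | hne
      · rw [Multiset.count_erase_self]; omega
      · rw [Multiset.count_erase_of_ne hne]
        exact Multiset.le_iff_count.mp hAH s
    apply ReachKB.succ t t' htH hKBt'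
    apply ih (replaceTile H t t') (kbRemove KB t') (t' ::ₘ A) (D.erase t')
    · exact Multiset.cons_le_cons _ hAe
    · have e1 : Multiset.card (replaceTile H t t') = Multiset.card H := by
        simp [replaceTile, Multiset.card_erase_of_mem htH]
        have : 0 < Multiset.card H := Multiset.card_pos.mpr (by
          intro h; subst h; simp at htH)
        omega
      have e2 := Multiset.card_erase_of_mem ht'
      have : 0 < Multiset.card D := Multiset.card_pos.mpr (by
        intro h; subst h; simp at ht')
      simp [e1, e2]
      omega
    · rw [Multiset.card_erase_of_mem ht', hD]; rfl
    · intro s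
      rcases eq_or_ne s t' with rfl | hne
      · rw [kbRemove, Function.update_self, Multiset.count_erase_self]
        exact Nat.sub_le_sub_right (hcnt s) 1
      · rw [kbRemove, Function.update_of_ne hne, Multiset.count_erase_of_ne hne]
        exact hcnt s
    · have heq : (t' ::ₘ A) + D.erase t' = A + D := by
        ext s
        rcases eq_or_ne s t' with rfl | hne
        · have : 0 < Multiset.count s D := Multiset.count_pos.mpr ht'
          simp only [Multiset.count_add, Multiset.count_cons_self,
            Multiset.count_erase_self]
          omega
        · simp only [Multiset.count_add, Multiset.count_cons_of_ne hne,
            Multiset.count_erase_of_ne hne]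
      rwa [heq]

lemma reach_of_completion (H : Multiset Tile) (KB : Tile → ℕ)
    (π : Multiset (Multiset Tile)) (P : Multiset (Multiset Tile × Multiset Tile))
    (hH : Multiset.card H = 14) (hq : π.sum ≤ H) (hP : IsQCompletion KB H π P) :
    ReachKB H KB (Multiset.card (P.map Prod.snd).sum) := by
  obtain ⟨hc5, hπle, hseed, hrem, hcnt, q, hqP, hqpair, hqmeld⟩ := hP
  set A := (P.map Prod.fst).sum with hA
  set D := (P.map Prod.snd).sum with hD
  -- A ≤ H
  have hsplit : π + (P.map Prod.fst - π) = P.map Prod.fst := by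
    rw [add_tsub_cancel_of_le hπle]
  have hAsum : A = π.sum + (P.map Prod.fst - π).sum := by
    rw [hA, ← Multiset.sum_add, hsplit]
  have hAH : A ≤ H := by
    rw [hAsum]
    calc π.sum + (P.map Prod.fst - π).sum ≤ π.sum + (H - π.sum) :=
          add_le_add_right hrem _
      _ = H := add_tsub_cancel_of_le hq
  -- Complete (A + D)
  have hADsum : A + D = (P.map fun r => r.1 + r.2).sum := by
    rw [hA, hD, ← Multiset.sum_map_add]
  have hcard4 : Multiset.card (P.erase q) = 4 := by
    rw [Multiset.card_erase_of_mem hqP, hc5]; rfl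
  have hne : P.erase q ≠ 0 := by
    intro h; rw [h] at hcard4; simp at hcard4
  obtain ⟨a, ha⟩ := Multiset.exists_mem_of_ne_zero hne
  obtain ⟨r, hr⟩ := Multiset.exists_cons_of_mem ha
  have hcard3 : Multiset.card r = 3 := by
    rw [hr] at hcard4; simp at hcard4; omega
  obtain ⟨b, c, d, rfl⟩ := Multiset.card_eq_three.mp hcard3
  have hPeq : P = q ::ₘ a ::ₘ b ::ₘ c ::ₘ {d} := by
    rw [← Multiset.cons_erase hqP, hr]; rfl
  have hmem : ∀ x ∈ ({a, b, c, d} : Multiset (Multiset Tile × Multiset Tile)),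
      IsMeld (x.1 + x.2) := by
    intro x hx
    apply hqmeld
    rw [hr]; exact hx
  have hcomp : Complete (A + D) := by
    refine ⟨![a.1 + a.2, b.1 + b.2, c.1 + c.2, d.1 + d.2, q.1 + q.2], ?_, ?_, ?_⟩
    · rw [Fin.sum_univ_five, hADsum, hPeq]
      simp only [Multiset.map_cons, Multiset.sum_cons, Multiset.map_singleton,
        Multiset.sum_singleton, Matrix.cons_val_zero, Matrix.cons_val_one,
        Matrix.cons_val_two, Matrix.cons_val_three, Matrix.cons_val_four,
        Matrix.vecHead, Matrix.vecTail, Function.comp_apply, Matrix.cons_val_succ,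
        Matrix.head_cons]
      abel
    · intro i hi
      fin_cases i
      · exact hmem a (by simp)
      · exact hmem b (by simp)
      · exact hmem c (by simp)
      · exact hmem d (by simp)
      · simp at hi
    · exact hqpair
  have hcardAD : Multiset.card A + Multiset.card D = 14 := by
    rw [← Multiset.card_add]; exact complete_card hcomp
  exact swap_lemma _ H KB A D hAH (by omega) rfl hcnt hcomp

/-- The knowledge-aware deficiency is at most the cost of any completable
quasi-decomposition; in particular a zero-cost quasi-decomposition witnesses
completeness of the hand. -/
theorem dfncyKB_le_qCost (H : Multiset Tile) (KB : Tile → ℕ)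
    (π : Multiset (Multiset Tile))
    (hH : IsKTile 14 H) (hKB : IsKB KB) (hcomp : KBCompatible H KB)
    (hpi : IsQDCMP KB H π) (hcpl : qCost KB H π ≠ ⊤) :
    dfncyKB H KB ≤ qCost KB H π ∧ (qCost KB H π = 0 → Complete H) := by
  have hH14 : Multiset.card H = 14 := hH.1
  have hq : π.sum ≤ H := hpi.2.1
  constructor
  · apply le_sInf
    rintro c ⟨P, hP, rfl⟩
    apply sInf_le
    exact ⟨_, reach_of_completion H KB π P hH14 hq hP, rfl⟩
  · intro h0
    have hlt : qCost KB H π < 1 := by rw [h0]; exact zero_lt_one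
    rw [qCost] at hlt
    obtain ⟨e, ⟨P, hP, rfl⟩, he⟩ := sInf_lt_iff.mp hlt
    have hcard0 : Multiset.card (P.map Prod.snd).sum = 0 := by
      have : (Multiset.card (P.map Prod.snd).sum : ℕ∞) < 1 := he
      exact_mod_cast Nat.lt_one_iff.mp (by exact_mod_cast this)
    have hr := reach_of_completion H KB π P hH14 hq hP
    rw [hcard0] at hr
    cases hr with
    | zero h => exact h
end
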